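/- For every sentence α := Q₁x₁Q₂x₂⋯Qₙxₙ β in prenex normal form of the first-order language FO(R) (variables only, no equality, single binary relation R), α is satisfiable in a first-order structure if and only if the translated L_{□∃²} formula φ*_α := □∃z∃z′ ψ*_α ∧ λ*_{n+1} ∧ γ*ₙ is satisfiable at some world of some constant domain model under some valuation. -/
import Mathlib


/-! ### First-order logic FO(R): variables only, no equality, one binary relation -/

/-- Quantifier-free FO(R) formulas. -/
inductive QF : Type
  | rel (x y : ℕ)
  | neg (β : QF)
  | and (β₁ β₂ : QF)

/-- Prenex FO(R) formulas `Q₁x₁⋯Qₙxₙ β` with `β` quantifier-free. -/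
inductive Prenex : Type
  | qf  (β : QF)
  | ex  (x : ℕ) (α : Prenex)
  | all (x : ℕ) (α : Prenex)

def QF.vars : QF → Finset ℕ
  | rel x y   => {x, y}
  | neg β     => β.vars
  | and β₁ β₂ => β₁.vars ∪ β₂.vars

/-- All variables appearing in a prenex formula. -/
def Prenex.vars : Prenex → Finset ℕ
  | qf β    => β.vars
  | ex x α  => insert x α.vars
  | all x α => insert x α.vars

/-- Free variables of a prenex formula. -/
def Prenex.free : Prenex → Finset ℕ
  | qf β    => β.vars
  | ex x α  => α.free.erase x
  | all x α => α.free.erase x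

/-- The quantifier depth (length of the quantifier prefix). -/
def Prenex.depth : Prenex → ℕ
  | qf _    => 0
  | ex _ α  => α.depth + 1
  | all _ α => α.depth + 1

def QF.Sat {D : Type} (Rel : D → D → Prop) (v : ℕ → D) : QF → Prop
  | rel x y   => Rel (v x) (v y)
  | neg β     => ¬ β.Sat Rel v
  | and β₁ β₂ => β₁.Sat Rel v ∧ β₂.Sat Rel v

def Prenex.Sat {D : Type} (Rel : D → D → Prop) (v : ℕ → D) : Prenex → Prop
  | qf β    => β.Sat Rel v
  | ex x α  => ∃ d : D, α.Sat Rel (Function.update v x d)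
  | all x α => ∀ d : D, α.Sat Rel (Function.update v x d)

/-- First-order satisfiability of a prenex FO(R) formula. -/
def FOSatisfiable (α : Prenex) : Prop :=
  ∃ (D : Type), Nonempty D ∧ ∃ (Rel : D → D → Prop) (v : ℕ → D), α.Sat Rel v


/-! ### The bundled fragment `L_{□∃²}`: one modality binding two quantifiers -/

/-- Formulas of `L_{□∃²}` with unary atoms (predicate `P` is coded `0`, predicate
`Q` is coded `1`): operators `□∃x∃x′` and `□∀x∀x′`, with duals `◇∀x∀x′` and
`◇∃x∃x′` as abbreviations. -/
inductive MF2 : Type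
  | atom    (p : ℕ) (x : ℕ)
  | neg     (φ : MF2)
  | and     (φ ψ : MF2)
  | boxEx2  (x x' : ℕ) (φ : MF2)
  | boxAll2 (x x' : ℕ) (φ : MF2)

/-- `◇∀x∀x′φ := ¬□∃x∃x′¬φ`. -/
def MF2.diaAll2 (x x' : ℕ) (φ : MF2) : MF2 := .neg (.boxEx2 x x' (.neg φ))

/-- `◇∃x∃x′φ := ¬□∀x∀x′¬φ`. -/
def MF2.diaEx2 (x x' : ℕ) (φ : MF2) : MF2 := .neg (.boxAll2 x x' (.neg φ))

/-- `⊤` as an abbreviation. -/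
def MF2.top : MF2 := .neg (.and (.atom 0 0) (.neg (.atom 0 0)))

/-- `φ → ψ := ¬(φ ∧ ¬ψ)`. -/
def MF2.imp (φ ψ : MF2) : MF2 := .neg (.and φ (.neg ψ))

/-- A constant domain model with worlds `W`, domain `D`, and unary predicates. -/
structure ConstModel (W D : Type) : Type where
  R : W → W → Prop
  nonempty_W : Nonempty W
  nonempty_D : Nonempty D
  val : W → ℕ → D → Prop

/-- Constant-domain satisfaction for `L_{□∃²}`. -/
def MSat2 {W D : Type} (M : ConstModel W D) : W → (ℕ → D) → MF2 → Prop
  | w, σ, .atom p x       => M.val w p (σ x)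
  | w, σ, .neg φ          => ¬ MSat2 M w σ φ
  | w, σ, .and φ ψ        => MSat2 M w σ φ ∧ MSat2 M w σ ψ
  | w, σ, .boxEx2 x x' φ  =>
      ∀ v : W, M.R w v → ∃ d d' : D,
        MSat2 M v (Function.update (Function.update σ x d) x' d') φ
  | w, σ, .boxAll2 x x' φ =>
      ∀ v : W, M.R w v → ∀ d d' : D,
        MSat2 M v (Function.update (Function.update σ x d) x' d') φ

/-- Modal satisfiability over constant domain models. -/
def MSatisfiable2 (φ : MF2) : Prop :=
  ∃ (W D : Type) (M : ConstModel W D) (w : W) (σ : ℕ → D), MSat2 M w σ φ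

/-! ### The translation -/

/-- `Tr(Rxy) := ◇∀z∀z′(Px ∧ Qy)`. -/
def trQF2 (z z' : ℕ) : QF → MF2
  | .rel x y   => MF2.diaAll2 z z' (.and (.atom 0 x) (.atom 1 y))
  | .neg β     => .neg (trQF2 z z' β)
  | .and β₁ β₂ => .and (trQF2 z z' β₁) (trQF2 z z' β₂)

/-- `ψ*_α := Δ₁Q₁x₁Q₁x₁′ ⋯ ΔₙQₙxₙQₙxₙ′ Tr(β)`: each `∃xᵢ` becomes `◇∃xᵢ∃xᵢ′` and
each `∀xᵢ` becomes `□∀xᵢ∀xᵢ′`, where `xᵢ′ = prime xᵢ` is a fresh primed copy. -/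
def psiTr2 (z z' : ℕ) (prime : ℕ → ℕ) : Prenex → MF2
  | .qf β    => trQF2 z z' β
  | .ex x α  => MF2.diaEx2 x (prime x) (psiTr2 z z' prime α)
  | .all x α => MF2.boxAll2 x (prime x) (psiTr2 z z' prime α)

/-- `(□∃z∃z′)^j φ`. -/
def iterBoxEx2 (z z' : ℕ) : ℕ → MF2 → MF2
  | 0, φ     => φ
  | n + 1, φ => MF2.boxEx2 z z' (iterBoxEx2 z z' n φ)

/-- `(◇∀z∀z′)^j φ`. -/
def iterDiaAll2 (z z' : ℕ) : ℕ → MF2 → MF2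
  | 0, φ     => φ
  | n + 1, φ => MF2.diaAll2 z z' (iterDiaAll2 z z' n φ)

/-- `λ*ₙ := ⋀_{j=0}^{n} (□∃z∃z′)^j ◇∀z∀z′⊤`. -/
def lamF2 (z z' : ℕ) : ℕ → MF2
  | 0     => MF2.diaAll2 z z' MF2.top
  | n + 1 => .and (lamF2 z z' n) (iterBoxEx2 z z' (n + 1) (MF2.diaAll2 z z' MF2.top))

/-- `γ*ₙ := □∀z₁∀z₂((◇∀z∀z′)ⁿ(◇∀z∀z′(Pz₁∧Qz₂)) → (□∃z∃z′)ⁿ(◇∀z∀z′(Pz₁∧Qz₂)))`. -/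
def gamF2 (z z' z₁ z₂ n : ℕ) : MF2 :=
  .boxAll2 z₁ z₂
    (MF2.imp (iterDiaAll2 z z' n (MF2.diaAll2 z z' (.and (.atom 0 z₁) (.atom 1 z₂))))
             (iterBoxEx2 z z' n (MF2.diaAll2 z z' (.and (.atom 0 z₁) (.atom 1 z₂)))))

/-- `φ*_α := □∃z∃z′ ψ*_α ∧ λ*_{n+1} ∧ γ*ₙ`, `n` the quantifier depth of `α`. -/
def phiTr2 (z z' z₁ z₂ : ℕ) (prime : ℕ → ℕ) (α : Prenex) : MF2 :=
  .and (.boxEx2 z z' (psiTr2 z z' prime α))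
       (.and (lamF2 z z' (α.depth + 1)) (gamF2 z z' z₁ z₂ α.depth))

open Function

/-- Worlds reachable in exactly `k` steps. -/
def creach2 {W D : Type} (M : ConstModel W D) : W → ℕ → W → Prop
  | w, 0, u => u = w
  | w, k+1, u => ∃ u₂, M.R w u₂ ∧ creach2 M u₂ k u

lemma creach2_snoc {W D : Type} {M : ConstModel W D} {w u u₂ : W} {k : ℕ}
    (h : creach2 M w k u) (h2 : M.R u u₂) : creach2 M w (k+1) u₂ := by
  induction k generalizing w with
  | zero => cases h; exact ⟨u₂, h2, rfl⟩
  | succ k ih => obtain ⟨u₃, hr, hc⟩ := h; exact ⟨u₃, hr, ih hc⟩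

def RelAt2 {W D : Type} (M : ConstModel W D) (u : W) (a b : D) : Prop :=
  ∃ u₂, M.R u u₂ ∧ M.val u₂ 0 a ∧ M.val u₂ 1 b

lemma QF.sat_congr {D : Type} {R : D → D → Prop} {v v' : ℕ → D} (β : QF)
    (h : ∀ x ∈ β.vars, v x = v' x) : β.Sat R v ↔ β.Sat R v' := by
  induction β with
  | rel x y =>
      simp only [QF.vars, Finset.mem_insert, Finset.mem_singleton] at h
      simp only [QF.Sat, h x (Or.inl rfl), h y (Or.inr rfl)]
  | neg β ih => simp only [QF.Sat]; rw [ih h]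
  | and β₁ β₂ ih₁ ih₂ =>
      simp only [QF.vars, Finset.mem_union] at h
      simp only [QF.Sat]
      rw [ih₁ (fun x hx => h x (Or.inl hx)), ih₂ (fun x hx => h x (Or.inr hx))]

lemma QF.sat_relCongr {D : Type} {R R' : D → D → Prop} {v : ℕ → D} (β : QF)
    (h : ∀ a b, R a b ↔ R' a b) : β.Sat R v ↔ β.Sat R' v := by
  induction β with
  | rel x y => simp only [QF.Sat]; exact h _ _
  | neg β ih => simp only [QF.Sat]; rw [ih]
  | and β₁ β₂ ih₁ ih₂ => simp only [QF.Sat]; rw [ih₁, ih₂]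

lemma Prenex.sat_congr {D : Type} {R : D → D → Prop} (α : Prenex) :
    ∀ {v v' : ℕ → D}, (∀ x ∈ α.vars, v x = v' x) → (α.Sat R v ↔ α.Sat R v') := by
  induction α with
  | qf β => intro v v' h; exact QF.sat_congr β h
  | ex x α ih =>
      intro v v' h
      simp only [Prenex.Sat]
      refine exists_congr fun d => ih fun y hy => ?_
      by_cases hyx : y = x
      · subst hyx; simp
      · simp only [Function.update_of_ne hyx]
        exact h y (by simp [Prenex.vars, hy])
  | all x α ih =>
      intro v v' h
      simp only [Prenex.Sat]
      refine forall_congr' fun d => ih fun y hy => ?_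
      by_cases hyx : y = x
      · subst hyx; simp
      · simp only [Function.update_of_ne hyx]
        exact h y (by simp [Prenex.vars, hy])

lemma msat_diaAll2 {W D : Type} (M : ConstModel W D) (u : W) (τ : ℕ → D) (z z' : ℕ) (φ : MF2) :
    MSat2 M u τ (MF2.diaAll2 z z' φ) ↔
      ∃ u₂, M.R u u₂ ∧ ∀ d d', MSat2 M u₂ (update (update τ z d) z' d') φ := by
  simp only [MF2.diaAll2, MSat2]
  push_neg
  tauto

lemma msat_diaEx2 {W D : Type} (M : ConstModel W D) (u : W) (τ : ℕ → D) (x x' : ℕ) (φ : MF2) :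
    MSat2 M u τ (MF2.diaEx2 x x' φ) ↔
      ∃ u₂, M.R u u₂ ∧ ∃ d d', MSat2 M u₂ (update (update τ x d) x' d') φ := by
  simp only [MF2.diaEx2, MSat2]
  push_neg
  tauto

lemma msat_top {W D : Type} (M : ConstModel W D) (u : W) (τ : ℕ → D) :
    MSat2 M u τ MF2.top := by
  simp only [MF2.top, MSat2]; tauto

lemma msat_imp {W D : Type} (M : ConstModel W D) (u : W) (τ : ℕ → D) (φ ψ : MF2) :
    MSat2 M u τ (MF2.imp φ ψ) ↔ (MSat2 M u τ φ → MSat2 M u τ ψ) := by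
  simp only [MF2.imp, MSat2]; tauto

lemma trQF2_iff {W D : Type} (M : ConstModel W D) (hD : Nonempty D) {z z' : ℕ}
    (β : QF) (hz : z ∉ β.vars) (hz' : z' ∉ β.vars) (u : W) (τ : ℕ → D) :
    MSat2 M u τ (trQF2 z z' β) ↔ β.Sat (RelAt2 M u) τ := by
  induction β generalizing τ with
  | rel x y =>
      simp only [QF.vars, Finset.mem_insert, Finset.mem_singleton] at hz hz'
      push_neg at hz hz'
      rw [trQF2, msat_diaAll2]
      simp only [MSat2, QF.Sat, RelAt2]
      constructor
      · rintro ⟨u₂, hr, h⟩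
        obtain ⟨d⟩ := hD
        have := h d d
        rw [Function.update_of_ne (Ne.symm hz'.1), Function.update_of_ne (Ne.symm hz.1),
            Function.update_of_ne (Ne.symm hz'.2), Function.update_of_ne (Ne.symm hz.2)] at this
        exact ⟨u₂, hr, this.1, this.2⟩
      · rintro ⟨u₂, hr, h1, h2⟩
        refine ⟨u₂, hr, fun d d' => ?_⟩
        rw [Function.update_of_ne (Ne.symm hz'.1), Function.update_of_ne (Ne.symm hz.1),
            Function.update_of_ne (Ne.symm hz'.2), Function.update_of_ne (Ne.symm hz.2)]
        exact ⟨h1, h2⟩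
  | neg β ih =>
      simp only [QF.vars] at hz hz'
      simp only [trQF2, MSat2, QF.Sat]
      rw [ih hz hz']
  | and β₁ β₂ ih₁ ih₂ =>
      simp only [QF.vars, Finset.mem_union] at hz hz'
      push_neg at hz hz'
      simp only [trQF2, MSat2, QF.Sat]
      rw [ih₁ hz.1 hz'.1, ih₂ hz.2 hz'.2]
lemma iterBoxEx2_iff {W D : Type} (M : ConstModel W D) (hD : Nonempty D) (z z' : ℕ)
    (θ : MF2) (S : W → Prop) (Inv : (ℕ → D) → Prop)
    (hpres : ∀ τ d d', Inv τ → Inv (update (update τ z d) z' d'))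
    (hθ : ∀ u τ, Inv τ → (MSat2 M u τ θ ↔ S u)) :
    ∀ (n : ℕ) (w : W) (τ : ℕ → D), Inv τ →
      (MSat2 M w τ (iterBoxEx2 z z' n θ) ↔ ∀ u, creach2 M w n u → S u) := by
  intro n
  induction n with
  | zero =>
      intro w τ hInv
      rw [iterBoxEx2, hθ w τ hInv]
      constructor
      · rintro h u rfl; exact h
      · intro h; exact h w rfl
  | succ n ih =>
      intro w τ hInv
      simp only [iterBoxEx2, MSat2]
      constructor
      · rintro h u ⟨u₂, hr, hc⟩
        obtain ⟨d, d', hsat⟩ := h u₂ hr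
        exact (ih u₂ _ (hpres τ d d' hInv)).1 hsat u hc
      · intro h u₂ hr
        obtain ⟨d⟩ := hD
        refine ⟨d, d, (ih u₂ _ (hpres τ d d hInv)).2 fun u hc => ?_⟩
        exact h u ⟨u₂, hr, hc⟩

lemma iterDiaAll2_iff {W D : Type} (M : ConstModel W D) (hD : Nonempty D) (z z' : ℕ)
    (θ : MF2) (S : W → Prop) (Inv : (ℕ → D) → Prop)
    (hpres : ∀ τ d d', Inv τ → Inv (update (update τ z d) z' d'))
    (hθ : ∀ u τ, Inv τ → (MSat2 M u τ θ ↔ S u)) :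
    ∀ (n : ℕ) (w : W) (τ : ℕ → D), Inv τ →
      (MSat2 M w τ (iterDiaAll2 z z' n θ) ↔ ∃ u, creach2 M w n u ∧ S u) := by
  intro n
  induction n with
  | zero =>
      intro w τ hInv
      rw [iterDiaAll2, hθ w τ hInv]
      constructor
      · intro h; exact ⟨w, rfl, h⟩
      · rintro ⟨u, rfl, h⟩; exact h
  | succ n ih =>
      intro w τ hInv
      rw [iterDiaAll2, msat_diaAll2]
      constructor
      · rintro ⟨u₂, hr, h⟩
        obtain ⟨d⟩ := hD
        obtain ⟨u, hc, hS⟩ := (ih u₂ _ (hpres τ d d hInv)).1 (h d d)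
        exact ⟨u, ⟨u₂, hr, hc⟩, hS⟩
      · rintro ⟨u, ⟨u₂, hr, hc⟩, hS⟩
        refine ⟨u₂, hr, fun d d' => (ih u₂ _ (hpres τ d d' hInv)).2 ⟨u, hc, hS⟩⟩

/-- `◇∀z∀z′⊤` says: there is a successor. -/
lemma msat_diaAllTop {W D : Type} (M : ConstModel W D) (u : W) (τ : ℕ → D) (z z' : ℕ) :
    MSat2 M u τ (MF2.diaAll2 z z' MF2.top) ↔ ∃ u₂, M.R u u₂ := by
  rw [msat_diaAll2]
  exact ⟨fun ⟨u₂, hr, _⟩ => ⟨u₂, hr⟩, fun ⟨u₂, hr⟩ => ⟨u₂, hr, fun _ _ => msat_top M _ _⟩⟩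

lemma lamF2_elim {W D : Type} {M : ConstModel W D} {w : W} {τ : ℕ → D} {z z' : ℕ} {m : ℕ}
    (h : MSat2 M w τ (lamF2 z z' m)) :
    ∀ j ≤ m, MSat2 M w τ (iterBoxEx2 z z' j (MF2.diaAll2 z z' MF2.top)) := by
  induction m with
  | zero =>
      intro j hj
      interval_cases j
      exact h
  | succ m ih =>
      rw [lamF2, MSat2] at h  -- h : _ ∧ _
      intro j hj
      rcases Nat.lt_or_ge j (m+1) with hlt | hge
      · exact ih h.1 j (Nat.lt_succ_iff.mp hlt)
      · have : j = m + 1 := le_antisymm hj hge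
        subst this
        exact h.2

lemma lamF2_intro {W D : Type} {M : ConstModel W D} {w : W} {τ : ℕ → D} {z z' : ℕ} {m : ℕ}
    (h : ∀ j, MSat2 M w τ (iterBoxEx2 z z' j (MF2.diaAll2 z z' MF2.top))) :
    MSat2 M w τ (lamF2 z z' m) := by
  induction m with
  | zero => exact h 0
  | succ m ih => exact ⟨ih, h (m+1)⟩
lemma psiTr2_iff {W D : Type} (M : ConstModel W D) (hD : Nonempty D)
    {z z' : ℕ} (prime : ℕ → ℕ) (V : Finset ℕ)
    (hz : z ∉ V) (hz' : z' ∉ V) (hfresh : ∀ x, prime x ∉ V)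
    (v : W) (n : ℕ) (Rel : D → D → Prop)
    (hsucc : ∀ k ≤ n, ∀ u, creach2 M v k u → ∃ u₂, M.R u u₂)
    (hrel : ∀ u, creach2 M v n u → ∀ a b, RelAt2 M u a b ↔ Rel a b) :
    ∀ (α : Prenex), α.vars ⊆ V → ∀ k u, creach2 M v k u → k + α.depth = n →
      ∀ τ, (MSat2 M u τ (psiTr2 z z' prime α) ↔ α.Sat Rel τ) := by
  intro α
  induction α with
  | qf β =>
      intro hsub k u hc hk τ
      simp only [Prenex.depth, Nat.add_zero] at hk
      subst hk
      rw [psiTr2, trQF2_iff M hD β (fun h => hz (hsub h)) (fun h => hz' (hsub h))]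
      exact QF.sat_relCongr β (hrel u hc)
  | ex x α ih =>
      intro hsub k u hc hk τ
      have hsub' : α.vars ⊆ V := fun y hy => hsub (Finset.mem_insert_of_mem hy)
      have hne : ∀ y ∈ α.vars, y ≠ prime x := fun y hy h => hfresh x (h ▸ hsub' hy)
      have hk' : (k + 1) + α.depth = n := by
        simp only [Prenex.depth] at hk; omega
      rw [psiTr2, msat_diaEx2]
      simp only [Prenex.Sat]
      constructor
      · rintro ⟨u₂, hr, d, d', hsat⟩
        refine ⟨d, ?_⟩
        rw [← Prenex.sat_congr α (v := update (update τ x d) (prime x) d')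
              (fun y hy => Function.update_of_ne (hne y hy) _ _)]
        exact (ih hsub' (k+1) u₂ (creach2_snoc hc hr) hk' _).1 hsat
      · rintro ⟨d, hsat⟩
        obtain ⟨u₂, hr⟩ := hsucc k (by omega) u hc
        refine ⟨u₂, hr, d, d, (ih hsub' (k+1) u₂ (creach2_snoc hc hr) hk' _).2 ?_⟩
        rw [Prenex.sat_congr α (v' := update τ x d)
              (fun y hy => Function.update_of_ne (hne y hy) _ _)]
        exact hsat
  | all x α ih =>
      intro hsub k u hc hk τ
      have hsub' : α.vars ⊆ V := fun y hy => hsub (Finset.mem_insert_of_mem hy)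
      have hne : ∀ y ∈ α.vars, y ≠ prime x := fun y hy h => hfresh x (h ▸ hsub' hy)
      have hk' : (k + 1) + α.depth = n := by
        simp only [Prenex.depth] at hk; omega
      rw [psiTr2]
      simp only [MSat2, Prenex.Sat]
      constructor
      · intro h d
        obtain ⟨u₂, hr⟩ := hsucc k (by omega) u hc
        have hsat := (ih hsub' (k+1) u₂ (creach2_snoc hc hr) hk' _).1 (h u₂ hr d d)
        rw [← Prenex.sat_congr α (v := update (update τ x d) (prime x) d)
              (fun y hy => Function.update_of_ne (hne y hy) _ _)]
        exact hsat
      · intro h u₂ hr d d'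
        refine (ih hsub' (k+1) u₂ (creach2_snoc hc hr) hk' _).2 ?_
        rw [Prenex.sat_congr α (v' := update τ x d)
              (fun y hy => Function.update_of_ne (hne y hy) _ _)]
        exact h d
/-- The product model used in the forward direction: worlds are pairs, total
accessibility, `P` marks the first component (when the pair is `Rel`-related),
`Q` the second. -/
def prodModel {D : Type} (d₀ : D) (Rel : D → D → Prop) : ConstModel (D × D) D where
  R := fun _ _ => True
  nonempty_W := ⟨(d₀, d₀)⟩
  nonempty_D := ⟨d₀⟩
  val := fun u p d => (p = 0 ∧ d = u.1 ∧ Rel u.1 u.2) ∨ (p = 1 ∧ d = u.2)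

lemma prodModel_relAt {D : Type} (d₀ : D) (Rel : D → D → Prop) (u : D × D) (a b : D) :
    RelAt2 (prodModel d₀ Rel) u a b ↔ Rel a b := by
  constructor
  · rintro ⟨⟨p, q⟩, -, h0, h1⟩
    simp only [prodModel] at h0 h1
    rcases h0 with ⟨-, rfl, hR⟩ | ⟨h, -⟩
    · rcases h1 with ⟨h, -⟩ | ⟨-, rfl⟩
      · exact absurd h one_ne_zero
      · exact hR
    · exact absurd h.symm one_ne_zero
  · intro h
    exact ⟨(a, b), trivial, Or.inl ⟨rfl, rfl, h⟩, Or.inr ⟨rfl, rfl⟩⟩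

/-- For every prenex FO(R) sentence `α = Q₁x₁⋯Qₙxₙ β`, `α` is
satisfiable in a first-order structure iff the translated `L_{□∃²}` formula
`φ*_α := □∃z∃z′ψ*_α ∧ λ*_{n+1} ∧ γ*ₙ` is satisfiable at some world of some constant
domain model under some valuation (for fresh pairwise-distinct `z, z′, z₁, z₂` not
appearing in `α`, and an injective choice `prime` of fresh primed copies of the
variables). -/
theorem fo_satisfiable_iff_boxEx2_translation_satisfiable
    (α : Prenex) (hsent : α.free = ∅) (z z' z₁ z₂ : ℕ)
    (hz : z ∉ α.vars) (hz' : z' ∉ α.vars) (hz₁ : z₁ ∉ α.vars) (hz₂ : z₂ ∉ α.vars)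
    (hdist : [z, z', z₁, z₂].Nodup)
    (prime : ℕ → ℕ) (hinj : Function.Injective prime)
    (hfresh : ∀ x : ℕ, prime x ∉ α.vars ∧ prime x ∉ ({z, z', z₁, z₂} : Set ℕ)) :
    FOSatisfiable α ↔ MSatisfiable2 (phiTr2 z z' z₁ z₂ prime α) := by
  simp only [List.nodup_cons, List.mem_cons, List.not_mem_nil, or_false, not_or,
    List.nodup_nil, and_true] at hdist
  obtain ⟨⟨hzz', hzz₁, hzz₂⟩, ⟨hz'z₁, hz'z₂⟩, hz₁z₂, -⟩ := hdist
  constructor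
  · -- forward: FO model gives the product constant-domain model
    rintro ⟨D, ⟨d₀⟩, Rel, vFO, hSat⟩
    have hD : Nonempty D := ⟨d₀⟩
    set M : ConstModel (D × D) D := prodModel d₀ Rel with hM
    have hRelAt : ∀ u a b, RelAt2 M u a b ↔ Rel a b := prodModel_relAt d₀ Rel
    have hRtot : ∀ u u' : D × D, M.R u u' := fun _ _ => trivial
    refine ⟨D × D, D, M, (d₀, d₀), vFO, ?_, ?_, ?_⟩
    · -- □∃z∃z′ ψ*
      intro u _
      refine ⟨d₀, d₀, ?_⟩
      rw [psiTr2_iff M hD prime α.vars hz hz' (fun x => (hfresh x).1) u α.depth Rel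
            (fun k _ u' _ => ⟨u', hRtot u' u'⟩) (fun u' _ a b => hRelAt u' a b)
            α (subset_refl _) 0 u rfl (Nat.zero_add _)]
      rw [Prenex.sat_congr α (v' := vFO) ?hagree]
      · exact hSat
      case hagree =>
        intro y hy
        have h1 : y ≠ z := fun h => hz (h ▸ hy)
        have h2 : y ≠ z' := fun h => hz' (h ▸ hy)
        rw [Function.update_of_ne h2, Function.update_of_ne h1]
    · -- λ*
      refine lamF2_intro fun j => ?_
      exact (iterBoxEx2_iff M hD z z' _ (fun u => ∃ u₂, M.R u u₂) (fun _ => True)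
        (fun _ _ _ _ => trivial) (fun u τ _ => msat_diaAllTop M u τ z z') j _ vFO trivial).2
        (fun u _ => ⟨u, hRtot u u⟩)
    · -- γ*
      intro v _ a b
      rw [msat_imp]
      set τ := update (update vFO z₁ a) z₂ b with hτ
      have hInvτ : τ z₁ = a ∧ τ z₂ = b := by
        refine ⟨?_, by simp [hτ]⟩
        rw [hτ, Function.update_of_ne hz₁z₂, Function.update_self]
      have hpres : ∀ (τ' : ℕ → D) (dd dd' : D), (τ' z₁ = a ∧ τ' z₂ = b) →
          ((update (update τ' z dd) z' dd') z₁ = a ∧ (update (update τ' z dd) z' dd') z₂ = b) := by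
        intro τ' dd dd' h
        rw [Function.update_of_ne (Ne.symm hz'z₁), Function.update_of_ne (Ne.symm hzz₁),
            Function.update_of_ne (Ne.symm hz'z₂), Function.update_of_ne (Ne.symm hzz₂)]
        exact h
      have hθ : ∀ (u : D × D) (τ' : ℕ → D), (τ' z₁ = a ∧ τ' z₂ = b) →
          (MSat2 M u τ' (MF2.diaAll2 z z' (.and (.atom 0 z₁) (.atom 1 z₂))) ↔ Rel a b) := by
        intro u τ' ⟨h1, h2⟩
        rw [show MF2.diaAll2 z z' (.and (.atom 0 z₁) (.atom 1 z₂)) = trQF2 z z' (QF.rel z₁ z₂)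
              from rfl,
            trQF2_iff M hD (QF.rel z₁ z₂) (by simp [QF.vars, hzz₁, hzz₂])
              (by simp [QF.vars, hz'z₁, hz'z₂]) u τ']
        simp only [QF.Sat, h1, h2, hRelAt]
      intro hA
      have := (iterDiaAll2_iff M hD z z' _ (fun _ => Rel a b) _ hpres hθ α.depth v τ hInvτ).1 hA
      obtain ⟨u, -, hab⟩ := this
      exact (iterBoxEx2_iff M hD z z' _ (fun _ => Rel a b) _ hpres hθ α.depth v τ hInvτ).2
        (fun _ _ => hab)
  · -- backward: extract an FO model from the modal model
    rintro ⟨W, D, M, w, σ, h1, hlam, hgam⟩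
    have hD : Nonempty D := M.nonempty_D
    set n := α.depth with hn
    have hsuccw : ∀ j ≤ n + 1, ∀ u, creach2 M w j u → ∃ u₂, M.R u u₂ := by
      intro j hj u hc
      exact (iterBoxEx2_iff M hD z z' _ (fun u => ∃ u₂, M.R u u₂) (fun _ => True)
        (fun _ _ _ _ => trivial) (fun u' τ _ => msat_diaAllTop M u' τ z z') j w σ trivial).1
        (lamF2_elim hlam j hj) u hc
    obtain ⟨v, hwv⟩ := hsuccw 0 (by omega) w rfl
    obtain ⟨d, d', hpsi⟩ := h1 v hwv
    set Rel : D → D → Prop := fun a b => ∃ u, creach2 M v n u ∧ RelAt2 M u a b with hRel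
    have hγ : ∀ a b, Rel a b → ∀ u, creach2 M v n u → RelAt2 M u a b := by
      intro a b hab u hc
      have hg := hgam v hwv a b
      rw [msat_imp] at hg
      set τ := update (update σ z₁ a) z₂ b with hτ
      have hInvτ : τ z₁ = a ∧ τ z₂ = b := by
        refine ⟨?_, by simp [hτ]⟩
        rw [hτ, Function.update_of_ne hz₁z₂, Function.update_self]
      have hpres : ∀ (τ' : ℕ → D) (dd dd' : D), (τ' z₁ = a ∧ τ' z₂ = b) →
          ((update (update τ' z dd) z' dd') z₁ = a ∧ (update (update τ' z dd) z' dd') z₂ = b) := by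
        intro τ' dd dd' h
        rw [Function.update_of_ne (Ne.symm hz'z₁), Function.update_of_ne (Ne.symm hzz₁),
            Function.update_of_ne (Ne.symm hz'z₂), Function.update_of_ne (Ne.symm hzz₂)]
        exact h
      have hθ : ∀ (u' : W) (τ' : ℕ → D), (τ' z₁ = a ∧ τ' z₂ = b) →
          (MSat2 M u' τ' (MF2.diaAll2 z z' (.and (.atom 0 z₁) (.atom 1 z₂))) ↔
            RelAt2 M u' a b) := by
        intro u' τ' ⟨ha, hb⟩
        rw [show MF2.diaAll2 z z' (.and (.atom 0 z₁) (.atom 1 z₂)) = trQF2 z z' (QF.rel z₁ z₂)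
              from rfl,
            trQF2_iff M hD (QF.rel z₁ z₂) (by simp [QF.vars, hzz₁, hzz₂])
              (by simp [QF.vars, hz'z₁, hz'z₂]) u' τ']
        simp only [QF.Sat, ha, hb]
      have hB := hg ((iterDiaAll2_iff M hD z z' _ (fun u' => RelAt2 M u' a b) _
        hpres hθ n v τ hInvτ).2 hab)
      exact (iterBoxEx2_iff M hD z z' _ (fun u' => RelAt2 M u' a b) _
        hpres hθ n v τ hInvτ).1 hB u hc
    have hrel : ∀ u, creach2 M v n u → ∀ a b, RelAt2 M u a b ↔ Rel a b :=
      fun u hc a b => ⟨fun h => ⟨u, hc, h⟩, fun h => hγ a b h u hc⟩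
    have hsucc : ∀ k ≤ n, ∀ u, creach2 M v k u → ∃ u₂, M.R u u₂ :=
      fun k hk u hc => hsuccw (k + 1) (by omega) u ⟨v, hwv, hc⟩
    exact ⟨D, hD, Rel, _,
      (psiTr2_iff M hD prime α.vars hz hz' (fun x => (hfresh x).1) v n Rel hsucc hrel
        α (subset_refl _) 0 v rfl (Nat.zero_add _) _).1 hpsi⟩
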